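/- The map χ ↦ deg_z⟨·, χ⟩ is a bijection between the lattice of cocharacters ℤ^n of the split torus (ℂ*)^n and the set of semiring homomorphisms from the semiring P of positive rational functions on (ℂ*)^n to the tropical semiring ℤ^t = (ℤ, max, +). -/

import Mathlib

open BigOperators

/-- The tropicalization of a polynomial: for a cocharacter `χ`, this is
`deg_z⟨f, χ⟩`, the top `z`-degree of `f` specialized at `X_i ↦ z^{χ i}`. -/
def tropPoly {n : ℕ} (f : MvPolynomial (Fin n) ℤ) (χ : Fin n → ℤ) : ℤ :=
  (f.support.sup fun d => ((∑ i, (d i : ℤ) * χ i : ℤ) : WithBot ℤ)).unbotD 0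

/-- A polynomial is positive if it is nonzero and all its coefficients are nonnegative. -/
def IsPosPoly {n : ℕ} (f : MvPolynomial (Fin n) ℤ) : Prop :=
  f ≠ 0 ∧ ∀ d, 0 ≤ f.coeff d

/-!
Both `tropPoly · χ` and an arbitrary homomorphism `Φ` (turning `+` into `max` and `×` into `+`
on positive polynomials) are determined by their values on the variables: multiplicativity
makes `d ↦ Φ (monomial d 1)` additive, hence equal to the weight `d ↦ ∑ dᵢ Φ(Xᵢ)`, positive
constants go to `0` since `Φ (c + 1) = max (Φ c) (Φ 1)`, and a positive polynomial is a sum of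
positive monomials with disjoint supports. As `tropPoly (X i) χ = χ i`, the cocharacter of `Φ`
is `i ↦ Φ (X i)`.
-/

open MvPolynomial
open Finsupp (weight weight_apply weight_single)

variable {n : ℕ}

section Positivity

lemma isPosPoly_monomial {c : ℤ} (hc : 0 < c) (d : Fin n →₀ ℕ) :
    IsPosPoly (monomial d c) := by
  refine ⟨monomial_eq_zero.not.2 hc.ne', fun e => ?_⟩
  rw [coeff_monomial]
  split_ifs <;> omega

lemma isPosPoly_C {c : ℤ} (hc : 0 < c) : IsPosPoly (C c : MvPolynomial (Fin n) ℤ) :=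
  isPosPoly_monomial hc 0

lemma isPosPoly_one : IsPosPoly (1 : MvPolynomial (Fin n) ℤ) :=
  isPosPoly_C one_pos

lemma isPosPoly_X (i : Fin n) : IsPosPoly (X i : MvPolynomial (Fin n) ℤ) :=
  isPosPoly_monomial one_pos _

namespace IsPosPoly

variable {f g : MvPolynomial (Fin n) ℤ}

lemma coeff_pos_of_mem_support (hf : IsPosPoly f) {d : Fin n →₀ ℕ} (hd : d ∈ f.support) :
    0 < f.coeff d :=
  (hf.2 d).lt_of_ne' (mem_support_iff.1 hd)

lemma support_add (hf : IsPosPoly f) (hg : IsPosPoly g) :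
    (f + g).support = f.support ∪ g.support := by
  ext d
  simp only [mem_support_iff, Finset.mem_union, coeff_add]
  have := hf.2 d
  have := hg.2 d
  omega

lemma add (hf : IsPosPoly f) (hg : IsPosPoly g) : IsPosPoly (f + g) := by
  refine ⟨?_, fun d => by simpa only [coeff_add] using add_nonneg (hf.2 d) (hg.2 d)⟩
  rw [← support_nonempty, hf.support_add hg]
  exact (support_nonempty.2 hf.1).mono Finset.subset_union_left

open Finset.HasAntidiagonal in
lemma coeff_mul_le_coeff_mul_add (hf : IsPosPoly f) (hg : IsPosPoly g) (a b : Fin n →₀ ℕ) :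
    f.coeff a * g.coeff b ≤ (f * g).coeff (a + b) := by
  rw [coeff_mul]
  have hab : (a, b) ∈ antidiagonal (a + b) := mem_antidiagonal.2 rfl
  exact Finset.single_le_sum (f := fun x => f.coeff x.1 * g.coeff x.2)
    (fun x _ => mul_nonneg (hf.2 x.1) (hg.2 x.2)) hab

lemma mul (hf : IsPosPoly f) (hg : IsPosPoly g) : IsPosPoly (f * g) := by
  refine ⟨mul_ne_zero hf.1 hg.1, fun d => ?_⟩
  rw [coeff_mul]
  exact Finset.sum_nonneg fun x _ => mul_nonneg (hf.2 x.1) (hg.2 x.2)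

lemma add_mem_support_mul (hf : IsPosPoly f) (hg : IsPosPoly g) {a b : Fin n →₀ ℕ}
    (ha : a ∈ f.support) (hb : b ∈ g.support) : a + b ∈ (f * g).support :=
  mem_support_iff.2 <| ne_of_gt <| (mul_pos (hf.coeff_pos_of_mem_support ha)
    (hg.coeff_pos_of_mem_support hb)).trans_le (hf.coeff_mul_le_coeff_mul_add hg a b)

lemma pos_of_monomial {d : Fin n →₀ ℕ} {c : ℤ} (h : IsPosPoly (monomial d c)) : 0 < c := by
  have hc : c ≠ 0 := fun hc => h.1 (by rw [hc, map_zero])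
  have := h.2 d
  rw [coeff_monomial, if_pos rfl] at this
  omega

lemma of_monomial_add {a : Fin n →₀ ℕ} {b : ℤ} (hp : IsPosPoly (monomial a b + f))
    (ha : a ∉ f.support) (hb : b ≠ 0) : 0 < b ∧ (f = 0 ∨ IsPosPoly f) := by
  rw [notMem_support_iff] at ha
  have hcoeff (d : Fin n →₀ ℕ) :
      (monomial a b + f).coeff d = (if a = d then b else 0) + f.coeff d := by
    rw [coeff_add, coeff_monomial]
  have hpa : (monomial a b + f).coeff a = b := by rw [hcoeff, if_pos rfl, ha, add_zero]
  refine ⟨hpa ▸ (hp.2 a).lt_of_ne' (by rwa [hpa]), ?_⟩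
  refine or_iff_not_imp_left.2 fun hf => ⟨hf, fun d => ?_⟩
  by_cases had : a = d
  · rw [← had, ha]
  · simpa [hcoeff, had] using hp.2 d

end IsPosPoly

end Positivity

section Tropicalization

variable (χ : Fin n → ℤ)

lemma tropPoly_eq_sup' {f : MvPolynomial (Fin n) ℤ} (hf : f ≠ 0) :
    tropPoly f χ = f.support.sup' (support_nonempty.2 hf) (weight χ) := by
  have hw : (fun d : Fin n →₀ ℕ => ((∑ i, (d i : ℤ) * χ i : ℤ) : WithBot ℤ)) =
      WithBot.some ∘ weight χ := by
    ext1 d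
    simp [weight_apply, Finsupp.sum_fintype]
  rw [tropPoly, hw, ← Finset.coe_sup' (support_nonempty.2 hf), WithBot.unbotD_coe]

lemma weight_le_tropPoly {f : MvPolynomial (Fin n) ℤ} (hf : f ≠ 0) {d : Fin n →₀ ℕ}
    (hd : d ∈ f.support) : weight χ d ≤ tropPoly f χ := by
  rw [tropPoly_eq_sup' χ hf]
  exact Finset.le_sup' _ hd

lemma tropPoly_monomial (d : Fin n →₀ ℕ) {c : ℤ} (hc : c ≠ 0) :
    tropPoly (monomial d c) χ = weight χ d := by
  rw [tropPoly_eq_sup' χ (monomial_eq_zero.not.2 hc)]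
  simp only [support_monomial, if_neg hc, Finset.sup'_singleton]

lemma tropPoly_X (i : Fin n) : tropPoly (X i) χ = χ i := by
  rw [X, tropPoly_monomial χ _ one_ne_zero, weight_single, one_smul]

variable {χ} {f g : MvPolynomial (Fin n) ℤ}

lemma tropPoly_add (hf : IsPosPoly f) (hg : IsPosPoly g) :
    tropPoly (f + g) χ = max (tropPoly f χ) (tropPoly g χ) := by
  rw [tropPoly_eq_sup' χ (hf.add hg).1, tropPoly_eq_sup' χ hf.1, tropPoly_eq_sup' χ hg.1,
    Finset.sup'_congr _ (hf.support_add hg) fun _ _ => rfl, Finset.sup'_union]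

lemma tropPoly_mul (hf : IsPosPoly f) (hg : IsPosPoly g) :
    tropPoly (f * g) χ = tropPoly f χ + tropPoly g χ := by
  refine le_antisymm ?_ ?_
  · rw [tropPoly_eq_sup' χ (hf.mul hg).1]
    refine Finset.sup'_le _ _ fun d hd => ?_
    obtain ⟨a, ha, b, hb, rfl⟩ := Finset.mem_add.1 (support_mul f g hd)
    rw [map_add]
    exact add_le_add (weight_le_tropPoly χ hf.1 ha) (weight_le_tropPoly χ hg.1 hb)
  · obtain ⟨a, ha, hfa⟩ := Finset.exists_mem_eq_sup' (support_nonempty.2 hf.1) (weight χ)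
    obtain ⟨b, hb, hgb⟩ := Finset.exists_mem_eq_sup' (support_nonempty.2 hg.1) (weight χ)
    calc tropPoly f χ + tropPoly g χ = weight χ (a + b) := by
          rw [map_add, tropPoly_eq_sup' χ hf.1, tropPoly_eq_sup' χ hg.1, hfa, hgb]
      _ ≤ tropPoly (f * g) χ := weight_le_tropPoly χ (hf.mul hg).1 (hf.add_mem_support_mul hg ha hb)

end Tropicalization

/-- The semiring homomorphisms `P → ℤ^t`, through their restriction to positive polynomials. -/
structure IsTropHom (Φ : MvPolynomial (Fin n) ℤ → ℤ) : Prop where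
  map_add_eq_max : ∀ f g, IsPosPoly f → IsPosPoly g → Φ (f + g) = max (Φ f) (Φ g)
  map_mul_eq_add : ∀ f g, IsPosPoly f → IsPosPoly g → Φ (f * g) = Φ f + Φ g

lemma isTropHom_tropPoly (χ : Fin n → ℤ) : IsTropHom (tropPoly · χ) :=
  ⟨fun _ _ => tropPoly_add, fun _ _ => tropPoly_mul⟩

namespace IsTropHom

variable {Φ Ψ : MvPolynomial (Fin n) ℤ → ℤ}

lemma map_one_eq_zero (hΦ : IsTropHom Φ) : Φ 1 = 0 := by
  have := hΦ.map_mul_eq_add 1 1 isPosPoly_one isPosPoly_one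
  rw [one_mul] at this
  omega

lemma map_C_eq_zero (hΦ : IsTropHom Φ) {c : ℤ} (hc : 0 < c) : Φ (C c) = 0 := by
  lift c to ℕ using hc.le
  induction c with
  | zero => omega
  | succ k ih =>
    rcases k.eq_zero_or_pos with rfl | hk
    · simpa using hΦ.map_one_eq_zero
    · rw [Nat.cast_succ, map_add, map_one,
        hΦ.map_add_eq_max _ _ (isPosPoly_C (by omega)) isPosPoly_one, ih (by omega),
        hΦ.map_one_eq_zero, max_self]

lemma map_monomial_one (hΦ : IsTropHom Φ) (d : Fin n →₀ ℕ) :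
    Φ (monomial d 1) = weight (fun i => Φ (X i)) d := by
  let φ : (Fin n →₀ ℕ) →+ ℤ := AddMonoidHom.mk' (fun d => Φ (monomial d 1)) fun d e => by
    rw [← hΦ.map_mul_eq_add _ _ (isPosPoly_monomial one_pos d) (isPosPoly_monomial one_pos e),
      monomial_mul, one_mul]
  suffices φ = weight fun i => Φ (X i) from DFunLike.congr_fun this d
  ext i
  simp [φ, X, weight_single]

lemma map_monomial (hΦ : IsTropHom Φ) (d : Fin n →₀ ℕ) {c : ℤ} (hc : 0 < c) :
    Φ (monomial d c) = weight (fun i => Φ (X i)) d := by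
  rw [← mul_one c, ← C_mul_monomial, hΦ.map_mul_eq_add _ _ (isPosPoly_C hc)
    (isPosPoly_monomial one_pos d), hΦ.map_C_eq_zero hc, zero_add, hΦ.map_monomial_one]

lemma eq_of_map_X (hΦ : IsTropHom Φ) (hΨ : IsTropHom Ψ) (h : ∀ i, Φ (X i) = Ψ (X i))
    {f : MvPolynomial (Fin n) ℤ} (hf : IsPosPoly f) : Φ f = Ψ f := by
  have hmonomial (d : Fin n →₀ ℕ) {c : ℤ} (hc : 0 < c) : Φ (monomial d c) = Ψ (monomial d c) := by
    rw [hΦ.map_monomial d hc, hΨ.map_monomial d hc, funext h]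
  induction f using monomial_add_induction_on with
  | C c =>
    rw [C_apply] at hf ⊢
    exact hmonomial 0 hf.pos_of_monomial
  | monomial_add a b f ha hb ih =>
    obtain ⟨hb, rfl | hf'⟩ := hf.of_monomial_add ha hb
    · rw [add_zero]
      exact hmonomial a hb
    · rw [hΦ.map_add_eq_max _ _ (isPosPoly_monomial hb a) hf',
        hΨ.map_add_eq_max _ _ (isPosPoly_monomial hb a) hf', hmonomial a hb, ih hf']

lemma eq_tropPoly (hΦ : IsTropHom Φ) {f : MvPolynomial (Fin n) ℤ} (hf : IsPosPoly f) :
    Φ f = tropPoly f fun i => Φ (X i) :=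
  hΦ.eq_of_map_X (isTropHom_tropPoly _) (fun i => (tropPoly_X (fun i => Φ (X i)) i).symm) hf

end IsTropHom

/-- `χ ↦ deg_z⟨·, χ⟩` is a bijection between the cocharacter lattice `ℤ^n` and
semiring homomorphisms from the semifield of positive rational functions to
`ℤ^t = (ℤ, max, +)`; a homomorphism is determined by its restriction to positive
polynomials, where it must turn `+` into `max` and `×` into `+`. -/
theorem stmt_13 {n : ℕ} :
    -- each cocharacter gives a semiring homomorphism
    (∀ (χ : Fin n → ℤ) (f g : MvPolynomial (Fin n) ℤ), IsPosPoly f → IsPosPoly g →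
      tropPoly (f + g) χ = max (tropPoly f χ) (tropPoly g χ) ∧
        tropPoly (f * g) χ = tropPoly f χ + tropPoly g χ) ∧
    -- injectivity
    (∀ χ χ' : Fin n → ℤ,
      (∀ f : MvPolynomial (Fin n) ℤ, IsPosPoly f → tropPoly f χ = tropPoly f χ') → χ = χ') ∧
    -- surjectivity: every semiring homomorphism arises from a unique cocharacter
    (∀ Φ : MvPolynomial (Fin n) ℤ → ℤ,
      (∀ f g, IsPosPoly f → IsPosPoly g → Φ (f + g) = max (Φ f) (Φ g)) →
      (∀ f g, IsPosPoly f → IsPosPoly g → Φ (f * g) = Φ f + Φ g) →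
      ∃! χ : Fin n → ℤ, ∀ f, IsPosPoly f → Φ f = tropPoly f χ) := by
  refine ⟨fun χ f g hf hg => ⟨tropPoly_add hf hg, tropPoly_mul hf hg⟩, ?_, ?_⟩
  · intro χ χ' h
    funext i
    simpa only [tropPoly_X] using h (X i) (isPosPoly_X i)
  · intro Φ hadd hmul
    refine ⟨fun i => Φ (X i), fun f => IsTropHom.eq_tropPoly ⟨hadd, hmul⟩, fun χ hχ => ?_⟩
    funext i
    simpa only [tropPoly_X] using (hχ (X i) (isPosPoly_X i)).symm
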